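/- Define W(x, ν) = νᵀ(ρ_U(x + ν) - ρ_U(x)) + ‖ρ_U(x + ν)‖² for x, ν ∈ ℝᴺ with componentwise saturation ρ_U. Then W(x, ν) ≥ 0 for all x, ν, and W(x, ν) = 0 if and only if x = 0 and ν = 0. -/

import Mathlib

open RealInnerProductSpace

noncomputable def sat (U η : ℝ) : ℝ := Real.sign η * min |η| U

noncomputable def satVec (U : ℝ) {N : ℕ} (x : EuclideanSpace ℝ (Fin N)) :
    EuclideanSpace ℝ (Fin N) := WithLp.toLp 2 (fun i => sat U (x i))

noncomputable def W2 (U : ℝ) {N : ℕ} (x ν : EuclideanSpace ℝ (Fin N)) : ℝ :=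
  ⟪ν, satVec U (x + ν) - satVec U x⟫ + ‖satVec U (x + ν)‖ ^ 2

/-!
Each coordinate map `sat U` is the clamp to `[-U, U]`, hence monotone and 1-Lipschitz, and such a
map is firmly nonexpansive: `(f y - f x)² ≤ (y - x) (f y - f x)`. Summing over coordinates with
`y = x + ν` gives `W(x, ν) ≥ ‖ρ(x + ν) - ρ(x)‖² + ‖ρ(x + ν)‖² ≥ 0`, and equality forces
`ρ(x) = ρ(x + ν) = 0`, i.e. `x = x + ν = 0`, since `ρ` vanishes only at `0`.
-/

theorem sq_sub_le_mul_sub_of_monotone_of_lipschitzWith_one {f : ℝ → ℝ} (hmono : Monotone f)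
    (hlip : LipschitzWith 1 f) (x y : ℝ) :
    (f y - f x) ^ 2 ≤ (y - x) * (f y - f x) := by
  have hdist : |f y - f x| ≤ |y - x| := by
    simpa [Real.dist_eq] using hlip.dist_le_mul y x
  have hsign : 0 ≤ (y - x) * (f y - f x) := by
    rcases le_total x y with hxy | hyx
    · exact mul_nonneg (sub_nonneg.2 hxy) (sub_nonneg.2 (hmono hxy))
    · exact mul_nonneg_of_nonpos_of_nonpos (sub_nonpos.2 hyx) (sub_nonpos.2 (hmono hyx))
  calc (f y - f x) ^ 2 = |f y - f x| * |f y - f x| := by rw [← sq, sq_abs]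
    _ ≤ |y - x| * |f y - f x| := by gcongr
    _ = (y - x) * (f y - f x) := by rw [← abs_mul, abs_of_nonneg hsign]

theorem sat_eq_max_min {U : ℝ} (hU : 0 ≤ U) (η : ℝ) : sat U η = max (-U) (min U η) := by
  rcases lt_trichotomy η 0 with hη | rfl | hη
  · rw [sat, Real.sign_of_neg hη, abs_of_neg hη, neg_one_mul, min_eq_right (hη.le.trans hU),
      ← max_neg_neg, neg_neg, max_comm]
  · simp [sat, hU]
  · rw [sat, Real.sign_of_pos hη, abs_of_pos hη, one_mul, min_comm,
      max_eq_right (by linarith [le_min hU hη.le])]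

theorem sat_monotone {U : ℝ} (hU : 0 ≤ U) : Monotone (sat U) := by
  intro a b hab
  simp only [sat_eq_max_min hU]
  gcongr

theorem sat_lipschitzWith_one {U : ℝ} (hU : 0 ≤ U) : LipschitzWith 1 (sat U) := by
  rw [funext (sat_eq_max_min hU)]
  exact (LipschitzWith.id.const_min U).const_max (-U)

theorem sat_eq_zero_iff {U : ℝ} (hU : 0 < U) {η : ℝ} : sat U η = 0 ↔ η = 0 := by
  simp +contextual [sat, Real.sign_eq_zero_iff, min_eq_iff, hU.ne']

theorem satVec_eq_zero_iff {U : ℝ} (hU : 0 < U) {N : ℕ} {x : EuclideanSpace ℝ (Fin N)} :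
    satVec U x = 0 ↔ x = 0 := by
  simp [satVec, funext_iff, sat_eq_zero_iff hU, PiLp.ext_iff]

theorem norm_satVec_sub_sq_le {U : ℝ} (hU : 0 ≤ U) {N : ℕ} (x y : EuclideanSpace ℝ (Fin N)) :
    ‖satVec U y - satVec U x‖ ^ 2 ≤ ⟪y - x, satVec U y - satVec U x⟫ := by
  rw [EuclideanSpace.real_norm_sq_eq]
  simp only [PiLp.inner_apply, PiLp.sub_apply, satVec]
  refine Finset.sum_le_sum fun i _ => ?_
  rw [Real.inner_apply]
  exact sq_sub_le_mul_sub_of_monotone_of_lipschitzWith_one (sat_monotone hU)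
    (sat_lipschitzWith_one hU) _ _

theorem W2_posdef (U : ℝ) (hU : 0 < U) (N : ℕ) (x ν : EuclideanSpace ℝ (Fin N)) :
    0 ≤ W2 U x ν ∧ (W2 U x ν = 0 ↔ x = 0 ∧ ν = 0) := by
  set s := satVec U (x + ν)
  set d := s - satVec U x
  have hfirm : ‖d‖ ^ 2 ≤ ⟪ν, d⟫ := by
    simpa only [add_sub_cancel_left] using norm_satVec_sub_sq_le hU.le x (x + ν)
  have hW : ‖d‖ ^ 2 + ‖s‖ ^ 2 ≤ W2 U x ν := by
    rw [W2]
    linarith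
  have hlower : 0 ≤ ‖d‖ ^ 2 + ‖s‖ ^ 2 := by positivity
  refine ⟨hlower.trans hW, fun hzero => ?_, ?_⟩
  · obtain ⟨hd, hs⟩ := (add_eq_zero_iff_of_nonneg (by positivity) (by positivity)).1
      (le_antisymm (hzero ▸ hW) hlower)
    rw [pow_eq_zero_iff two_ne_zero, norm_eq_zero] at hd hs
    have hxν : x + ν = 0 := (satVec_eq_zero_iff hU).1 hs
    have hx : x = 0 := (satVec_eq_zero_iff hU).1 (sub_eq_zero.1 hd ▸ hs)
    exact ⟨hx, by simpa [hx] using hxν⟩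
  · rintro ⟨rfl, rfl⟩
    simp [W2, (satVec_eq_zero_iff hU).2 rfl]
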